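/- arXiv:1011.2549 — 2 statements merged into one kernel-verified Lean document; each statement's English description precedes it below -/
import Mathlib

section
/- Let A = T(u₁, u₂) be the free associative graded ℤ-algebra on generators u₁ of degree 2 and u₂ of degree 4, made a graded connected Hopf algebra by Δu₁ = u₁⊗1 + 1⊗u₁ and Δu₂ = u₂⊗1 + u₁⊗u₁ + 1⊗u₂, extended multiplicatively (this is H_*(ΩΣℂP²;ℤ)). Then for every λ ∈ ℤ the element u₂ + λ·u₁u₁ is not primitive (the primitivity condition forces 1 + 2λ = 0, which has no integer solution); consequently A is not isomorphic, as a graded Hopf algebra over ℤ, to any primitively generated (Lie-Hopf) Hopf algebra. -/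
/-!
Every character `f : T(u₁,u₂) → R` gives a character `f ⋆ f = (f ⊗ f) ∘ Δ`, which sends a primitive
element `p` to `2 f(p)`. Taking `f` constant `1` into `ℤ`, primitivity of `u₂ + λ·u₁u₁` reads
`3 + 4λ = 2 + 2λ`, impossible in `ℤ`. Over `ZMod 2` the characters `f ⋆ f` kill every primitive
element, so for the constant characters `0` and `1` they agree on the subalgebra generated by the
primitives; but they differ on `u₂`, where `f ⋆ f` takes the value `c + c² + c`.
-/

open scoped TensorProduct

noncomputable section

attribute [local instance 2000] Algebra.toModule

/-- The free associative `ℤ`-algebra `T(u₁, u₂)` on two generators;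
as an algebra this is `H_*(ΩΣℂP²;ℤ)` (Bott–Samelson). -/
abbrev LoopHomCP2 : Type := FreeAlgebra ℤ (Fin 2)

/-- The generator `u₁`, of (homological) degree `2`. -/
def u₁ : LoopHomCP2 := FreeAlgebra.ι ℤ 0

/-- The generator `u₂`, of (homological) degree `4`. -/
def u₂ : LoopHomCP2 := FreeAlgebra.ι ℤ 1

/-- The comultiplication of `H_*(ΩΣℂP²;ℤ)`: the unique algebra homomorphism
`T(u₁,u₂) → T(u₁,u₂) ⊗ T(u₁,u₂)` with `Δu₁ = u₁⊗1 + 1⊗u₁` and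
`Δu₂ = u₂⊗1 + u₁⊗u₁ + 1⊗u₂`. -/
def Δ : LoopHomCP2 →ₐ[ℤ] LoopHomCP2 ⊗[ℤ] LoopHomCP2 :=
  FreeAlgebra.lift ℤ
    ![u₁ ⊗ₜ[ℤ] 1 + 1 ⊗ₜ[ℤ] u₁,
      u₂ ⊗ₜ[ℤ] 1 + u₁ ⊗ₜ[ℤ] u₁ + 1 ⊗ₜ[ℤ] u₂]

/-- An element of a Hopf algebra is primitive if `Δa = a⊗1 + 1⊗a`. -/
def IsPrimitive (x : LoopHomCP2) : Prop :=
  Δ x = x ⊗ₜ[ℤ] 1 + 1 ⊗ₜ[ℤ] x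

namespace LoopHomCP2

variable {R : Type*} [CommRing R]

def constChar (c : R) : LoopHomCP2 →ₐ[ℤ] R := FreeAlgebra.lift ℤ fun _ => c

@[simp] lemma constChar_u₁ (c : R) : constChar c u₁ = c := by simp [constChar, u₁]

@[simp] lemma constChar_u₂ (c : R) : constChar c u₂ = c := by simp [constChar, u₂]

def conv (f g : LoopHomCP2 →ₐ[ℤ] R) : LoopHomCP2 →ₐ[ℤ] R :=
  (Algebra.TensorProduct.lift f g fun _ _ => Commute.all _ _).comp Δ

@[simp] lemma conv_u₁ (f g : LoopHomCP2 →ₐ[ℤ] R) : conv f g u₁ = f u₁ + g u₁ := by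
  simp [conv, Δ, u₁]

@[simp] lemma conv_u₂ (f g : LoopHomCP2 →ₐ[ℤ] R) :
    conv f g u₂ = f u₂ + f u₁ * g u₁ + g u₂ := by
  simp [conv, Δ, u₂, u₁]

lemma conv_apply_of_isPrimitive (f g : LoopHomCP2 →ₐ[ℤ] R) {p : LoopHomCP2}
    (hp : IsPrimitive p) : conv f g p = f p + g p := by
  rw [IsPrimitive] at hp
  simp [conv, hp]

lemma adjoin_isPrimitive_le_equalizer_conv_self [CharP R 2] (f g : LoopHomCP2 →ₐ[ℤ] R) :
    Algebra.adjoin ℤ {p | IsPrimitive p} ≤ AlgHom.equalizer (conv f f) (conv g g) := by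
  refine Algebra.adjoin_le fun p hp => ?_
  change conv f f p = conv g g p
  rw [conv_apply_of_isPrimitive f f hp, conv_apply_of_isPrimitive g g hp,
    CharTwo.add_self_eq_zero, CharTwo.add_self_eq_zero]

end LoopHomCP2

open LoopHomCP2 in
/-- For every `λ ∈ ℤ` the element `u₂ + λ·u₁u₁` is not
primitive in `H_*(ΩΣℂP²;ℤ)` (primitivity forces `1 + 2λ = 0`, which has no
integer solution); consequently the Hopf algebra `H_*(ΩΣℂP²;ℤ)` is not
generated as an algebra by its primitive elements, that is, it is not
isomorphic (as a graded Hopf algebra over `ℤ`) to any primitively generated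
(Lie-Hopf) Hopf algebra. -/
theorem loopHomCP2_not_lieHopf :
    (∀ lam : ℤ, ¬ IsPrimitive (u₂ + lam • (u₁ * u₁))) ∧
      Algebra.adjoin ℤ {x : LoopHomCP2 | IsPrimitive x} ≠ ⊤ := by
  constructor
  · intro lam h
    have h_eval : 3 + 4 * lam = 2 * (1 + lam) := by
      have := conv_apply_of_isPrimitive (constChar (1 : ℤ)) (constChar 1) h
      simp only [map_add, map_zsmul, map_mul, conv_u₁, conv_u₂, constChar_u₁, constChar_u₂,
        smul_eq_mul] at this
      linear_combination this
    omega
  · intro htop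
    have hu₂ := adjoin_isPrimitive_le_equalizer_conv_self (constChar (1 : ZMod 2)) (constChar 0)
      (htop ▸ Algebra.mem_top : u₂ ∈ _)
    change conv _ _ u₂ = conv _ _ u₂ at hu₂
    simp only [conv_u₂, constChar_u₁, constChar_u₂, mul_zero, add_zero] at hu₂
    exact absurd hu₂ (by decide)

end
end

section
/- Let H_b = ℤ⟨w₁, w₂, ...⟩ be the free associative graded ℤ-algebra on countably many generators w_n of degree 2n, made a graded connected Hopf algebra by Δw_n = Σ_{k=0}^n (n choose k) w_k⊗w_{n−k} (with w₀ = 1), extended multiplicatively; and let H_p = ℤ⟨ξ₁, ξ₂, ...⟩ be the free associative graded ℤ-algebra on generators ξ_n of degree 2n with every ξ_n primitive. Then H_b and H_p are isomorphic as graded Hopf algebras over ℤ. (Topologically, H_b ≅ H_*(ΩΣ(ΩΣS²);ℤ) and H_p ≅ H_*(ΩΣ(⋁_{i=1}^∞ S^{2i});ℤ), and the isomorphism is induced by looping the James splitting ΣΩΣS² ≃ Σ(⋁_{i=1}^∞ S^{2i}).) -/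
/-!
STATEMENT 17 (Buchstaber–Grbić, Section 5): the free associative graded Hopf
algebra `H_b = ℤ⟨w₁, w₂, …⟩` (`deg w_n = 2n`) with the binomial coproduct
`Δw_n = Σ (n choose k) w_k ⊗ w_{n−k}` — topologically `H_*(ΩΣ(ΩΣS²);ℤ)` —
is isomorphic as a graded Hopf algebra over `ℤ` to the free associative
algebra `H_p = ℤ⟨ξ₁, ξ₂, …⟩` (`deg ξ_n = 2n`) with all `ξ_n` primitive —
topologically `H_*(ΩΣ(⋁_{i≥1} S^{2i});ℤ)`.
(All generators have even degree, so no Koszul signs intervene.)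
-/

open scoped TensorProduct

noncomputable section

attribute [local instance 2000] Algebra.toModule

/-- The free associative `ℤ`-algebra on countably many generators indexed by
`n ≥ 1`, the `n`-th generator having degree `2n`. -/
abbrev FreeZ : Type := FreeAlgebra ℤ ℕ+

/-- The generators: `w 0 = 1` and, for `n ≥ 1`, `w n` is the `n`-th free
generator (of degree `2n`). -/
def w : ℕ → FreeZ
  | 0 => 1
  | (n + 1) => FreeAlgebra.ι ℤ (⟨n + 1, Nat.succ_pos n⟩ : ℕ+)

/-- The binomial comultiplication of `H_b = H_*(ΩΣ(ΩΣS²);ℤ)`: the unique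
algebra homomorphism with `Δw_n = Σ_{k=0}^{n} (n choose k) w_k ⊗ w_{n−k}`. -/
def Δb : FreeZ →ₐ[ℤ] FreeZ ⊗[ℤ] FreeZ :=
  FreeAlgebra.lift ℤ
    (fun n : ℕ+ => ∑ k ∈ Finset.range ((n : ℕ) + 1),
      ((n : ℕ).choose k : ℤ) • (w k ⊗ₜ[ℤ] w ((n : ℕ) - k)))

/-- The primitive comultiplication of `H_p = H_*(ΩΣ(⋁_{i≥1}S^{2i});ℤ)`: the
unique algebra homomorphism with `Δξ_n = ξ_n⊗1 + 1⊗ξ_n`. -/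
def Δp : FreeZ →ₐ[ℤ] FreeZ ⊗[ℤ] FreeZ :=
  FreeAlgebra.lift ℤ
    (fun n : ℕ+ => FreeAlgebra.ι ℤ n ⊗ₜ[ℤ] 1 + 1 ⊗ₜ[ℤ] FreeAlgebra.ι ℤ n)

/-- The submodule of homogeneous elements of weight `n` (homological degree
`2n`): the span of the products of generators whose indices sum to `n`. -/
def weightPiece (n : ℕ) : Submodule ℤ FreeZ :=
  Submodule.span ℤ
    {x : FreeZ | ∃ l : List ℕ+, (l.map fun i => (i : ℕ)).sum = n ∧
      x = (l.map fun i => FreeAlgebra.ι ℤ i).prod}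

/-!
Write `W(t) = ∑ wₙ tⁿ/n!`. The binomial coproduct says exactly that `W` is grouplike,
`Δ W = W ⊗ W`, so its inverse is grouplike too and the logarithmic derivative `W' W⁻¹` is
primitive. Its coefficients `pₙ = w_{n+1} + (products of w₁, …, wₙ)` have weight `n + 1`, so
`ξ_{n+1} ↦ pₙ` is a unitriangular, hence invertible, endomorphism of the free algebra, and it
intertwines the coproducts because both composites are algebra maps agreeing on the generators.
Over `ℤ` the series are handled through the binomial convolution of their coefficient sequences.
-/

open Finset

/-- Multiplication of exponential generating series:
`(∑ aₙ tⁿ/n!) (∑ bₙ tⁿ/n!) = ∑ (a ⋆ b)ₙ tⁿ/n!`, written without denominators. -/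
def binomConv {A : Type*} [Semiring A] (a b : ℕ → A) (n : ℕ) : A :=
  ∑ p ∈ antidiagonal n, n.choose p.1 • (a p.1 * b p.2)

local infixl:70 " ⋆ " => binomConv

def binomConvOne {A : Type*} [Semiring A] : ℕ → A := Pi.single 0 1

section BinomialConvolution

variable {A B : Type*}

section Semiring

variable [Semiring A] [Semiring B]

theorem binomConv_assoc (a b c : ℕ → A) : a ⋆ b ⋆ c = a ⋆ (b ⋆ c) := by
  ext n
  simp only [binomConv, smul_sum, sum_mul, mul_sum, smul_mul_assoc, mul_smul_comm, smul_smul,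
    sum_sigma']
  apply sum_nbij' (fun ⟨⟨_, l⟩, ⟨i, j⟩⟩ ↦ ⟨(i, j + l), (j, l)⟩)
    (fun ⟨⟨i, _⟩, ⟨j, l⟩⟩ ↦ ⟨(i + j, l), (i, j)⟩)
  iterate 2
    · rintro ⟨⟨_, _⟩, ⟨_, _⟩⟩ h
      simp only [mem_sigma, HasAntidiagonal.mem_antidiagonal, and_true] at h ⊢
      omega
  iterate 2 · rintro ⟨⟨_, _⟩, ⟨_, _⟩⟩; simp
  rintro ⟨⟨k, l⟩, ⟨i, j⟩⟩ h
  obtain ⟨rfl, rfl⟩ : k + l = n ∧ i + j = k := by simpa using h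
  rw [mul_assoc, Nat.choose_mul (Nat.le_add_right i j), Nat.add_sub_cancel_left,
    Nat.add_assoc, Nat.add_sub_cancel_left]

theorem binomConv_add_left (a b c : ℕ → A) : (a + b) ⋆ c = a ⋆ c + b ⋆ c := by
  ext n
  simp only [binomConv, Pi.add_apply, add_mul, smul_add, sum_add_distrib]

theorem binomConv_one (a : ℕ → A) : a ⋆ binomConvOne = a := by
  ext n
  rw [binomConv, sum_eq_single (n, 0)]
  · simp [binomConvOne]
  · rintro ⟨i, j⟩ hij hne
    obtain rfl | hj := Nat.eq_zero_or_pos j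
    · simp_all
    · simp [binomConvOne, hj.ne']
  · simp

theorem one_binomConv (a : ℕ → A) : binomConvOne ⋆ a = a := by
  ext n
  rw [binomConv, sum_eq_single (0, n)]
  · simp [binomConvOne]
  · rintro ⟨i, j⟩ hij hne
    obtain rfl | hi := Nat.eq_zero_or_pos i
    · simp_all
    · simp [binomConvOne, hi.ne']
  · simp

theorem map_binomConv {F : Type*} [FunLike F A B] [RingHomClass F A B] (f : F) (a b : ℕ → A)
    (n : ℕ) : f ((a ⋆ b) n) = ((f ∘ a) ⋆ (f ∘ b)) n := by
  simp only [binomConv, map_sum, map_nsmul, map_mul, Function.comp_apply]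

theorem map_binomConvOne {F : Type*} [FunLike F A B] [RingHomClass F A B] (f : F) :
    f ∘ binomConvOne = binomConvOne := by
  ext n
  simp only [binomConvOne, Function.comp_apply, Pi.single_apply]
  split_ifs <;> simp

theorem binomConv_comm_of_commute {a b : ℕ → A} (h : ∀ i j, Commute (a i) (b j)) :
    a ⋆ b = b ⋆ a := by
  ext n
  rw [binomConv, binomConv, ← Nat.sum_antidiagonal_swap]
  refine sum_congr rfl fun p hp ↦ ?_
  rw [Prod.fst_swap, Prod.snd_swap, (h _ _).eq,
    Nat.choose_symm_of_eq_add (HasAntidiagonal.mem_antidiagonal.1 hp).symm]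

/-- Pascal's rule makes the shift `a ↦ (n ↦ a (n + 1))` a derivation. -/
theorem binomConv_succ (a b : ℕ → A) (n : ℕ) :
    (a ⋆ b) (n + 1) = (a ⋆ fun j ↦ b (j + 1)) n + ((fun i ↦ a (i + 1)) ⋆ b) n := by
  rw [binomConv, sum_antidiagonal_choose_succ_nsmul (fun i j ↦ a i * b j), binomConv, binomConv]
  congr 1
  refine sum_congr rfl fun p hp ↦ ?_
  rw [Nat.choose_symm_of_eq_add (HasAntidiagonal.mem_antidiagonal.1 hp).symm]

theorem binomConv_mem_graded {σ : Type*} [SetLike σ A] [AddSubmonoidClass σ A] (𝒜 : ℕ → σ)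
    [SetLike.GradedMonoid 𝒜] {a b : ℕ → A} {k : ℕ} (ha : ∀ i, a i ∈ 𝒜 (i + k))
    (hb : ∀ j, b j ∈ 𝒜 j) (n : ℕ) : (a ⋆ b) n ∈ 𝒜 (n + k) :=
  sum_mem fun p hp ↦ nsmul_mem (by
    rw [← HasAntidiagonal.mem_antidiagonal.1 hp, Nat.add_right_comm]
    exact SetLike.mul_mem_graded (ha p.1) (hb p.2)) _

theorem binomConv_succ_of_apply_zero {a : ℕ → A} (ha : a 0 = 1) (b : ℕ → A) (n : ℕ) :
    (a ⋆ b) (n + 1) =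
      b (n + 1) + ∑ p ∈ antidiagonal n, (n + 1).choose (p.1 + 1) • (a (p.1 + 1) * b p.2) := by
  rw [binomConv, Nat.sum_antidiagonal_succ, Nat.choose_zero_right, one_smul, ha, one_mul]

end Semiring

section Ring

variable [Ring A]

theorem binomConv_left_cancel {a x y : ℕ → A} (ha : a 0 = 1) (h : a ⋆ x = a ⋆ y) : x = y := by
  ext n
  induction n using Nat.strong_induction_on with
  | _ n ih =>
    cases n with
    | zero => simpa [binomConv, ha] using congrFun h 0
    | succ n =>
      have hn := congrFun h (n + 1)
      rw [binomConv_succ_of_apply_zero ha, binomConv_succ_of_apply_zero ha] at hn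
      refine add_right_cancel (hn.trans (congrArg _ (sum_congr rfl fun p hp ↦ ?_)))
      rw [ih p.2 (by have := HasAntidiagonal.mem_antidiagonal.1 hp; omega)]

def binomConvInv (a : ℕ → A) : ℕ → A
  | 0 => 1
  | n + 1 => -∑ k ∈ range (n + 1), (n + 1).choose (k + 1) • (a (k + 1) * binomConvInv a (n - k))

theorem binomConv_binomConvInv {a : ℕ → A} (ha : a 0 = 1) :
    a ⋆ binomConvInv a = binomConvOne := by
  ext n
  cases n with
  | zero => simp [binomConv, binomConvInv, binomConvOne, ha]
  | succ n =>
    rw [binomConv_succ_of_apply_zero ha, Nat.sum_antidiagonal_eq_sum_range_succ_mk, binomConvInv]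
    simp [binomConvOne]

theorem binomConvInv_mem_graded {σ : Type*} [SetLike σ A] [AddSubgroupClass σ A] (𝒜 : ℕ → σ)
    [SetLike.GradedMonoid 𝒜] {a : ℕ → A} (ha : ∀ i, a i ∈ 𝒜 i) (n : ℕ) :
    binomConvInv a n ∈ 𝒜 n := by
  induction n using Nat.strong_induction_on with
  | _ n ih =>
    cases n with
    | zero => rw [binomConvInv]; exact SetLike.one_mem_graded 𝒜
    | succ n =>
      rw [binomConvInv]
      refine neg_mem (sum_mem fun k hk ↦ nsmul_mem ?_ _)
      have hk : k ≤ n := Nat.lt_succ_iff.1 (mem_range.1 hk)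
      rw [show n + 1 = k + 1 + (n - k) by omega]
      exact SetLike.mul_mem_graded (ha _) (ih _ (by omega))

end Ring

section TensorProduct

open Algebra.TensorProduct

variable {R C D : Type*} [CommSemiring R] [Semiring C] [Algebra R C] [Semiring D] [Algebra R D]

def binomConvTmul (c : ℕ → C) (d : ℕ → D) : ℕ → C ⊗[R] D :=
  (fun i ↦ c i ⊗ₜ 1) ⋆ (fun j ↦ 1 ⊗ₜ d j)

theorem binomConvTmul_apply (c : ℕ → C) (d : ℕ → D) (n : ℕ) :
    binomConvTmul (R := R) c d n = ∑ p ∈ antidiagonal n, n.choose p.1 • (c p.1 ⊗ₜ[R] d p.2) := by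
  simp only [binomConvTmul, binomConv, tmul_mul_tmul, mul_one, one_mul]

theorem binomConvTmul_binomConv_binomConvTmul (c c' : ℕ → C) (d d' : ℕ → D) :
    binomConvTmul (R := R) c d ⋆ binomConvTmul c' d' = binomConvTmul (c ⋆ c') (d ⋆ d') := by
  have hcomm : (fun j ↦ (1 : C) ⊗ₜ[R] d j) ⋆ (fun i ↦ c' i ⊗ₜ 1) =
      (fun i ↦ c' i ⊗ₜ 1) ⋆ (fun j ↦ 1 ⊗ₜ d j) :=
    binomConv_comm_of_commute fun i j ↦ by
      simp only [Commute, SemiconjBy, tmul_mul_tmul, mul_one, one_mul]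
  have hl : (fun n ↦ (c ⋆ c') n ⊗ₜ[R] (1 : D)) = (fun i ↦ c i ⊗ₜ 1) ⋆ (fun i ↦ c' i ⊗ₜ 1) :=
    funext (map_binomConv (includeLeft (S := R)) c c')
  have hr : (fun n ↦ (1 : C) ⊗ₜ[R] (d ⋆ d') n) = (fun j ↦ 1 ⊗ₜ d j) ⋆ (fun j ↦ 1 ⊗ₜ d' j) :=
    funext (map_binomConv includeRight d d')
  rw [binomConvTmul, binomConvTmul, binomConvTmul, hl, hr, binomConv_assoc,
    ← binomConv_assoc _ _ (fun j ↦ 1 ⊗ₜ d' j), hcomm, binomConv_assoc, binomConv_assoc]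

theorem binomConvTmul_binomConvOne_right (c : ℕ → C) (n : ℕ) :
    binomConvTmul (R := R) c (binomConvOne : ℕ → D) n = c n ⊗ₜ 1 := by
  have h : (fun j ↦ (1 : C) ⊗ₜ[R] (binomConvOne j : D)) = binomConvOne :=
    map_binomConvOne includeRight
  rw [binomConvTmul, h, binomConv_one]

theorem binomConvTmul_binomConvOne_left (d : ℕ → D) (n : ℕ) :
    binomConvTmul (R := R) (binomConvOne : ℕ → C) d n = 1 ⊗ₜ d n := by
  have h : (fun i ↦ (binomConvOne i : C) ⊗ₜ[R] (1 : D)) = binomConvOne :=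
    map_binomConvOne (includeLeft (R := R) (S := R))
  rw [binomConvTmul, h, one_binomConv]

theorem binomConvTmul_one :
    binomConvTmul (R := R) (binomConvOne : ℕ → C) (binomConvOne : ℕ → D) = binomConvOne :=
  funext fun n ↦ (binomConvTmul_binomConvOne_right _ n).trans
    (congrFun (map_binomConvOne (includeLeft (R := R) (S := R) (B := D))) n)

theorem binomConvTmul_succ (c : ℕ → C) (d : ℕ → D) (n : ℕ) :
    binomConvTmul (R := R) c d (n + 1) =
      binomConvTmul c (fun j ↦ d (j + 1)) n + binomConvTmul (fun i ↦ c (i + 1)) d n :=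
  binomConv_succ _ _ n

end TensorProduct

end BinomialConvolution

namespace FreeAlgebra

variable {R X : Type*} [CommRing R] [LT X] [WellFoundedLT X]

theorem lift_surjective_of_triangular {f : X → FreeAlgebra R X}
    (hf : ∀ i, f i - ι R i ∈ Algebra.adjoin R (ι R '' {j | j < i})) :
    Function.Surjective (lift R f) := by
  have hgen : ∀ i, ι R i ∈ (lift R f).range := by
    intro i
    induction i using WellFoundedLT.induction with
    | _ i ih =>
      have hlower : Algebra.adjoin R (ι R '' {j | j < i}) ≤ (lift R f).range :=
        Algebra.adjoin_le (by rintro _ ⟨j, hj, rfl⟩; exact ih j hj)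
      have hfi : f i ∈ (lift R f).range := ⟨ι R i, lift_ι_apply f i⟩
      simpa using sub_mem hfi (hlower (hf i))
  have htop : (lift R f).range = ⊤ :=
    eq_top_iff.2 (adjoin_range_ι R X ▸ Algebra.adjoin_le (by rintro _ ⟨i, rfl⟩; exact hgen i))
  exact (AlgHom.range_eq_top _).1 htop

theorem lift_injective_of_triangular {f : X → FreeAlgebra R X}
    (hf : ∀ i, f i - ι R i ∈ Algebra.adjoin R (ι R '' {j | j < i})) :
    Function.Injective (lift R f) := by
  classical
  -- Solve `lift R g (f i) = ι R i` for `g i`, recursively along `<`.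
  obtain ⟨g, hg⟩ : ∃ g : X → FreeAlgebra R X,
      ∀ i, g i = ι R i - lift R (fun j ↦ if j < i then g j else 0) (f i - ι R i) :=
    ⟨wellFounded_lt.fix fun i g ↦
        ι R i - lift R (fun j ↦ if h : j < i then g j h else 0) (f i - ι R i),
      fun i ↦ wellFounded_lt.fix_eq _ i⟩
  have hagree : ∀ i, lift R g (f i - ι R i) =
      lift R (fun j ↦ if j < i then g j else 0) (f i - ι R i) := fun i ↦
    AlgHom.adjoin_le_equalizer _ _ (by rintro _ ⟨j, hj : j < i, rfl⟩; simp [hj]) (hf i)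
  have hleft : (lift R g).comp (lift R f) = AlgHom.id R _ := by
    ext i
    calc lift R g (lift R f (ι R i)) = g i + lift R g (f i - ι R i) := by
          rw [lift_ι_apply, map_sub, lift_ι_apply, add_sub_cancel]
      _ = ι R i := by rw [hagree, hg i, sub_add_cancel]
  exact Function.LeftInverse.injective (g := lift R g) fun x ↦ congrArg (· x) hleft

end FreeAlgebra

open FreeAlgebra

/-- The coercion `ℕ+ → ℕ` in `weightPiece` elaborates through the list monad. -/
theorem weightPiece_eq_span (n : ℕ) :
    weightPiece n = Submodule.span ℤ
      {x | ∃ l : List ℕ+, (l.map PNat.val).sum = n ∧ x = (l.map (ι ℤ)).prod} := by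
  simp only [weightPiece, List.pure_def, List.bind_eq_flatMap, List.map_id_fun', id_eq,
    ← List.map_eq_flatMap]

instance : SetLike.GradedMonoid weightPiece where
  one_mem := Submodule.subset_span ⟨[], by simp, by simp⟩
  mul_mem := by
    intro m n x y hx hy
    have hle : weightPiece m * weightPiece n ≤ weightPiece (m + n) := by
      simp only [weightPiece_eq_span, Submodule.span_mul_span]
      refine Submodule.span_le.2 ?_
      rintro _ ⟨_, ⟨l₁, hl₁, rfl⟩, _, ⟨l₂, hl₂, rfl⟩, rfl⟩
      exact Submodule.subset_span ⟨l₁ ++ l₂, by rw [List.map_append, List.sum_append, hl₁, hl₂],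
        by rw [List.map_append, List.prod_append]⟩
    exact hle (Submodule.mul_mem_mul hx hy)

theorem ι_mem_weightPiece (i : ℕ+) : ι ℤ i ∈ weightPiece i :=
  Submodule.subset_span ⟨[i], by simp, by simp⟩

theorem w_succ (n : ℕ) : w (n + 1) = ι ℤ n.succPNat := rfl

theorem w_mem_weightPiece : ∀ n, w n ∈ weightPiece n
  | 0 => SetLike.GradedOne.one_mem
  | n + 1 => ι_mem_weightPiece ⟨n + 1, n.succ_pos⟩

theorem weightPiece_le_adjoin {n : ℕ} {i : ℕ+} (h : n < i) :
    weightPiece n ≤ Subalgebra.toSubmodule (Algebra.adjoin ℤ (ι ℤ '' {j | j < i})) := by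
  rw [weightPiece_eq_span]
  refine Submodule.span_le.2 ?_
  rintro _ ⟨l, hl, rfl⟩
  refine Subalgebra.list_prod_mem _ fun x hx ↦ ?_
  obtain ⟨j, hj, rfl⟩ := List.mem_map.1 hx
  have : (j : ℕ) ≤ n := hl ▸ List.le_sum_of_mem (List.mem_map_of_mem hj)
  exact Algebra.subset_adjoin ⟨j, show (j : ℕ) < i by omega, rfl⟩

theorem Δb_w (n : ℕ) : Δb (w n) = binomConvTmul w w n := by
  cases n with
  | zero => simp [w, binomConvTmul_apply, Algebra.TensorProduct.one_def]
  | succ n =>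
    rw [binomConvTmul_apply, Nat.sum_antidiagonal_eq_sum_range_succ_mk]
    refine (lift_ι_apply _ _).trans ?_
    simp only [natCast_zsmul, PNat.mk_coe, Nat.succ_eq_add_one]

theorem binomConvTmul_w_apply_zero : binomConvTmul (R := ℤ) w w 0 = 1 := by
  rw [← Δb_w, w, map_one]

theorem Δb_binomConvInv_w (n : ℕ) :
    Δb (binomConvInv w n) = binomConvTmul (binomConvInv w) (binomConvInv w) n := by
  have hw : Δb ∘ w = binomConvTmul w w := funext Δb_w
  refine congrFun
    (binomConv_left_cancel (x := Δb ∘ binomConvInv w) binomConvTmul_w_apply_zero ?_) n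
  calc binomConvTmul w w ⋆ (Δb ∘ binomConvInv w) = Δb ∘ (w ⋆ binomConvInv w) := by
        rw [← hw]; exact (funext (map_binomConv Δb _ _)).symm
    _ = binomConvOne := by rw [binomConv_binomConvInv rfl, map_binomConvOne]
    _ = binomConvTmul w w ⋆ binomConvTmul (binomConvInv w) (binomConvInv w) := by
        rw [binomConvTmul_binomConv_binomConvTmul, binomConv_binomConvInv rfl, binomConvTmul_one]

/-- The coefficients of `W'(t) W(t)⁻¹` for `W(t) = ∑ wₙ tⁿ/n!`. -/
def logDerivW : ℕ → FreeZ := (fun n ↦ w (n + 1)) ⋆ binomConvInv w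

theorem Δb_logDerivW (n : ℕ) :
    Δb (logDerivW n) = logDerivW n ⊗ₜ 1 + 1 ⊗ₜ logDerivW n := by
  have hw : Δb ∘ (fun n ↦ w (n + 1)) =
      binomConvTmul w (fun n ↦ w (n + 1)) + binomConvTmul (fun n ↦ w (n + 1)) w :=
    funext fun n ↦ (Δb_w (n + 1)).trans (binomConvTmul_succ w w n)
  have hs : Δb ∘ binomConvInv w = binomConvTmul (binomConvInv w) (binomConvInv w) :=
    funext Δb_binomConvInv_w
  rw [logDerivW, map_binomConv, hw, hs, binomConv_add_left,
    binomConvTmul_binomConv_binomConvTmul, binomConvTmul_binomConv_binomConvTmul,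
    binomConv_binomConvInv rfl, Pi.add_apply, binomConvTmul_binomConvOne_left,
    binomConvTmul_binomConvOne_right, add_comm]

theorem logDerivW_mem_weightPiece (n : ℕ) : logDerivW n ∈ weightPiece (n + 1) :=
  binomConv_mem_graded weightPiece (fun i ↦ w_mem_weightPiece (i + 1))
    (binomConvInv_mem_graded weightPiece w_mem_weightPiece) n

theorem logDerivW_sub_w_mem_adjoin (n : ℕ) :
    logDerivW n - w (n + 1) ∈ Algebra.adjoin ℤ (ι ℤ '' {j | j < n.succPNat}) := by
  have hmem : ∀ {m x}, m < n + 1 → x ∈ weightPiece m →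
      x ∈ Algebra.adjoin ℤ (ι ℤ '' {j | j < n.succPNat}) :=
    fun hm hx ↦ weightPiece_le_adjoin hm hx
  rw [logDerivW, binomConv, ← add_sum_erase _ _ (show (n, 0) ∈ antidiagonal n by simp),
    Nat.choose_self, one_smul, binomConvInv, mul_one, add_sub_cancel_left]
  refine sum_mem fun ⟨i, j⟩ hp ↦ nsmul_mem (mul_mem ?_ ?_) _
  all_goals
    simp only [mem_erase, ne_eq, Prod.mk.injEq, HasAntidiagonal.mem_antidiagonal] at hp
  · exact hmem (by omega) (w_mem_weightPiece _)
  · exact hmem (by omega) (binomConvInv_mem_graded weightPiece w_mem_weightPiece _)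

/-- `H_b` (binomial coproduct) and `H_p` (primitive
coproduct) are isomorphic as graded Hopf algebras over `ℤ`: there is an
algebra isomorphism `e : H_p ≃ H_b` compatible with the two coproducts which
sends the degree-`2n` generator `ξ_n` to a homogeneous element of degree
`2n`.  (E.g. `ξ₁ ↦ w₁`, `ξ₂ ↦ w₂ − w₁w₁`, `ξ₃ ↦ w₃ − 3w₂w₁ + 2w₁w₁w₁`.) -/
theorem binomial_hopf_iso_primitive_hopf :
    ∃ e : FreeZ ≃ₐ[ℤ] FreeZ,
      (∀ x : FreeZ,
        Δb (e x) = TensorProduct.map e.toLinearMap e.toLinearMap (Δp x)) ∧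
      ∀ n : ℕ+, e (FreeAlgebra.ι ℤ n) ∈ weightPiece n := by
  set f : ℕ+ → FreeZ := fun i ↦ logDerivW i.natPred
  have hf : ∀ i, f i - ι ℤ i ∈ Algebra.adjoin ℤ (ι ℤ '' {j | j < i}) := fun i ↦ by
    simpa only [w_succ, PNat.succPNat_natPred] using logDerivW_sub_w_mem_adjoin i.natPred
  have hΔ : Δb.comp (lift ℤ f) = (Algebra.TensorProduct.map (lift ℤ f) (lift ℤ f)).comp Δp := by
    ext i
    simp [Δp, f, Δb_logDerivW]
  let e := AlgEquiv.ofBijective (lift ℤ f)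
    ⟨lift_injective_of_triangular hf, lift_surjective_of_triangular hf⟩
  refine ⟨e, fun x ↦ ?_, fun i ↦ ?_⟩
  · exact DFunLike.congr_fun hΔ x
  · show lift ℤ f (ι ℤ i) ∈ _
    simpa [f, PNat.natPred_add_one] using logDerivW_mem_weightPiece i.natPred

end
end
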